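/- A set D ⊆ X is dense in (X, τ) if and only if D is dense in (X, τ^α). -/

import Mathlib

def alphaOpens (X : Type*) [TopologicalSpace X] : Set (Set X) :=
  {U | ∃ V N : Set X, IsOpen V ∧ IsNowhereDense N ∧ U = V \ N}

def tAlpha (X : Type*) [TopologicalSpace X] : TopologicalSpace X :=
  TopologicalSpace.generateFrom (alphaOpens X)

/-!
The sets `V \ N` are closed under finite intersections, so they form a basis of `τ^α`, and it
suffices to see that a `τ`-dense set `D` meets every nonempty `V \ N`. Since `N` is nowhere dense,
the `τ`-open set `V \ closure N` is still nonempty, and `D` meets it. Conversely `τ ⊆ τ^α`.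
-/

section

open Set TopologicalSpace

variable {X : Type*} [TopologicalSpace X]

lemma IsNowhereDense.union {s t : Set X} (hs : IsNowhereDense s) (ht : IsNowhereDense t) :
    IsNowhereDense (s ∪ t) := by
  rw [IsNowhereDense, closure_union, interior_union_isClosed_of_interior_empty isClosed_closure ht,
    hs]

lemma IsNowhereDense.nonempty_diff_closure {V N : Set X} (hN : IsNowhereDense N) (hV : IsOpen V)
    (hne : (V \ N).Nonempty) : (V \ closure N).Nonempty := by
  obtain ⟨x, hxV, -⟩ := hne
  by_contra h
  have hV_sub : V ⊆ interior (closure N) :=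
    interior_maximal (sdiff_eq_empty.mp (not_nonempty_iff_eq_empty.mp h)) hV
  rw [hN] at hV_sub
  exact hV_sub hxV

lemma Dense.inter_diff_nonempty {D V N : Set X} (hD : Dense D) (hV : IsOpen V)
    (hN : IsNowhereDense N) (hne : (V \ N).Nonempty) : (V \ N ∩ D).Nonempty := by
  obtain ⟨y, ⟨hyV, hyN⟩, hyD⟩ :=
    hD.inter_open_nonempty _ (hV.sdiff isClosed_closure) (hN.nonempty_diff_closure hV hne)
  exact ⟨y, ⟨hyV, fun h => hyN (subset_closure h)⟩, hyD⟩

lemma IsOpen.mem_alphaOpens {U : Set X} (hU : IsOpen U) : U ∈ alphaOpens X :=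
  ⟨U, ∅, hU, isNowhereDense_empty, sdiff_empty.symm⟩

lemma finiteInter_alphaOpens : FiniteInter (alphaOpens X) where
  univ_mem := isOpen_univ.mem_alphaOpens
  inter_mem := by
    rintro _ ⟨V₁, N₁, hV₁, hN₁, rfl⟩ _ ⟨V₂, N₂, hV₂, hN₂, rfl⟩
    exact ⟨V₁ ∩ V₂, N₁ ∪ N₂, hV₁.inter hV₂, hN₁.union hN₂, by grind⟩

lemma isTopologicalBasis_alphaOpens : @IsTopologicalBasis X (tAlpha X) (alphaOpens X) :=
  @isTopologicalBasis_of_subbasis_of_finiteInter X (tAlpha X) _ rfl finiteInter_alphaOpens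

end

theorem dense_iff_dense_tauAlpha {X : Type*} [TopologicalSpace X] (D : Set X) :
    Dense D ↔ @Dense X (tAlpha X) D := by
  rw [@TopologicalSpace.IsTopologicalBasis.dense_iff X (tAlpha X) _ isTopologicalBasis_alphaOpens D]
  constructor
  · rintro hD _ ⟨V, N, hV, hN, rfl⟩ hne
    exact hD.inter_diff_nonempty hV hN hne
  · exact fun h => dense_iff_inter_open.mpr fun U hU hne => h U hU.mem_alphaOpens hne
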